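/- arXiv:2404.17442 — 3 statements merged into one kernel-verified Lean document; each statement's English description precedes it below -/
import Mathlib

section
/- (Desymmetrization inequality) For a fixed hypothesis set W and a loss ℓ bounded in [0,B], E_S[sup_{w∈W} |R̂_S(w) − R(w)|] ≥ (1/2)·Rad(W) − B/(2√n), where Rad(W) = E_S[Rad_S(W)] is the expected Rademacher complexity. -/
/-!
Fix a sign vector `ε` and let `A = {i | εᵢ = 1}`. Centering every loss at its mean `R(w)`,
`∑ εᵢ ℓ(w, zᵢ) = ∑_{i ∈ A} (ℓ(w, zᵢ) - R(w)) - ∑_{i ∉ A} (ℓ(w, zᵢ) - R(w)) + R(w) ∑ εᵢ`.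
A partial centered sum over `A` is the expectation, over a ghost sample `S'`, of the full centered
sum at the hybrid sample that agrees with `S` on `A` and with `S'` off `A`. That sum is at most
`n` times the uniform deviation at the hybrid sample, and the hybrid sample has the law of `S`,
so each of the two partial sums contributes at most `n · E_S sup_w |R̂_S(w) - R(w)|` after
taking expectations. The last term is at most `B |∑ εᵢ|`, and `E_ε |∑ εᵢ| ≤ √n` by
Cauchy–Schwarz, since `E_ε (∑ εᵢ)² = n`.
-/

open MeasureTheory Finset

/-- Empirical Rademacher complexity (uniform average over sign vectors). -/
noncomputable def empRad {W Z : Type*} (ℓ : W → Z → ℝ) (Ws : Set W) {n : ℕ}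
    (S : Fin n → Z) : ℝ :=
  (1 / (n : ℝ)) *
    ((∑ ε : Fin n → Bool, ⨆ w ∈ Ws, ∑ i, (if ε i then (1 : ℝ) else -1) * ℓ w (S i)) / 2 ^ n)

section RademacherSigns

variable {ι : Type*} [Fintype ι]

lemma sum_sign_mul_eq (ε : ι → Bool) (x : ι → ℝ) (r : ℝ) :
    ∑ i, (if ε i then (1 : ℝ) else -1) * x i =
      ∑ i with ε i, (x i - r) - ∑ i with ¬ε i, (x i - r) +
        r * ∑ i, (if ε i then (1 : ℝ) else -1) := by
  rw [sub_eq_add_neg, ← sum_neg_distrib, ← sum_ite, mul_sum, ← sum_add_distrib]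
  refine sum_congr rfl fun i _ => ?_
  split_ifs <;> ring

variable [DecidableEq ι]

lemma sum_sign_mul_sign_of_ne {i j : ι} (hij : i ≠ j) :
    ∑ ε : ι → Bool, (if ε i then (1 : ℝ) else -1) * (if ε j then (1 : ℝ) else -1) = 0 := by
  refine sum_ninvolution (fun ε => Function.update ε i (!ε i)) (fun ε => ?_)
    (fun ε _ h => ?_) (fun _ => mem_univ _) (fun ε => by simp)
  · simp only [Function.update_self, Function.update_of_ne hij.symm]
    cases ε i <;> cases ε j <;> norm_num
  · simpa using congrFun h i

lemma sum_sq_sum_sign :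
    ∑ ε : ι → Bool, (∑ i, (if ε i then (1 : ℝ) else -1)) ^ 2 =
      2 ^ Fintype.card ι * Fintype.card ι := by
  have hdiag (i : ι) :
      ∑ ε : ι → Bool, (if ε i then (1 : ℝ) else -1) * (if ε i then (1 : ℝ) else -1) =
        2 ^ Fintype.card ι := by
    simp_rw [← sq, apply_ite (· ^ 2), one_pow, neg_one_sq, ite_self]
    simp
  calc ∑ ε : ι → Bool, (∑ i, (if ε i then (1 : ℝ) else -1)) ^ 2
      = ∑ i, ∑ j, ∑ ε : ι → Bool,
          (if ε i then (1 : ℝ) else -1) * (if ε j then (1 : ℝ) else -1) := by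
        simp_rw [sq, sum_mul_sum]
        rw [sum_comm]
        exact sum_congr rfl fun i _ => sum_comm
    _ = ∑ i : ι, (2 : ℝ) ^ Fintype.card ι := by
        refine sum_congr rfl fun i _ => ?_
        rw [sum_eq_single i (fun j _ hji => sum_sign_mul_sign_of_ne hji.symm) (by simp), hdiag]
    _ = 2 ^ Fintype.card ι * Fintype.card ι := by simp [mul_comm]

lemma sum_abs_sum_sign_le :
    ∑ ε : ι → Bool, |∑ i, (if ε i then (1 : ℝ) else -1)| ≤
      2 ^ Fintype.card ι * √(Fintype.card ι) := by
  have hcs := sq_sum_le_card_mul_sum_sq (s := (univ : Finset (ι → Bool)))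
    (f := fun ε => |∑ i, (if ε i then (1 : ℝ) else -1)|)
  simp_rw [sq_abs, sum_sq_sum_sign, card_univ, Fintype.card_fun, Fintype.card_bool] at hcs
  rw [← pow_le_pow_iff_left₀ (sum_nonneg fun _ _ => abs_nonneg _) (by positivity) two_ne_zero,
    mul_pow, Real.sq_sqrt (Nat.cast_nonneg _)]
  push_cast at hcs
  linarith

end RademacherSigns

section GhostSample

variable {ι Z : Type*} [DecidableEq ι] [MeasurableSpace Z]

lemma measurable_finset_piecewise (A : Finset ι) :
    Measurable fun p : (ι → Z) × (ι → Z) => A.piecewise p.1 p.2 := by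
  refine measurable_pi_lambda _ fun i => ?_
  by_cases hi : i ∈ A
  · simp only [Finset.piecewise_eq_of_mem _ _ _ hi]
    fun_prop
  · simp only [Finset.piecewise_eq_of_notMem _ _ _ hi]
    fun_prop

variable [Fintype ι] {μ : Measure Z} [IsProbabilityMeasure μ]

lemma measurePreserving_finset_piecewise (A : Finset ι) :
    MeasurePreserving (fun p : (ι → Z) × (ι → Z) => A.piecewise p.1 p.2)
      ((Measure.pi fun _ => μ).prod (Measure.pi fun _ => μ)) (Measure.pi fun _ => μ) := by
  refine ⟨measurable_finset_piecewise A, (Measure.pi_eq fun s hs => ?_).symm⟩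
  have hpre : (fun p : (ι → Z) × (ι → Z) => A.piecewise p.1 p.2) ⁻¹' Set.univ.pi s =
      Set.univ.pi (A.piecewise s fun _ => Set.univ) ×ˢ
        Set.univ.pi (A.piecewise (fun _ => Set.univ) s) := by
    ext p
    simp only [Set.mem_preimage, Set.mem_pi, Set.mem_univ, true_implies, Set.mem_prod,
      ← forall_and]
    refine forall_congr' fun i => ?_
    by_cases hi : i ∈ A <;> simp [hi]
  rw [Measure.map_apply (measurable_finset_piecewise A) (.univ_pi hs), hpre, Measure.prod_prod,
    Measure.pi_pi, Measure.pi_pi, ← prod_mul_distrib]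
  refine prod_congr rfl fun i _ => ?_
  by_cases hi : i ∈ A <;> simp [hi]

variable {f : Z → ℝ}

lemma integral_comp_piecewise_apply (hf : AEStronglyMeasurable f μ) (A : Finset ι)
    (S : ι → Z) (i : ι) :
    ∫ S', f (A.piecewise S S' i) ∂Measure.pi (fun _ => μ) =
      if i ∈ A then f (S i) else ∫ z, f z ∂μ := by
  by_cases hi : i ∈ A
  · simp [hi]
  · simp only [hi, Finset.piecewise_eq_of_notMem _ _ _ hi, if_false]
    exact integral_comp_eval (μ := fun _ => μ) hf

lemma sum_sub_integral_eq_integral_piecewise (hf : Integrable f μ) (A : Finset ι)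
    (S : ι → Z) :
    ∑ i ∈ A, (f (S i) - ∫ z, f z ∂μ) =
      ∫ S', ∑ i, (f (A.piecewise S S' i) - ∫ z, f z ∂μ) ∂Measure.pi (fun _ => μ) := by
  have hint (i : ι) : Integrable (fun S' => f (A.piecewise S S' i)) (Measure.pi fun _ => μ) := by
    by_cases hi : i ∈ A
    · simp [hi]
    · simpa [Finset.piecewise_eq_of_notMem _ _ _ hi] using
        integrable_comp_eval (μ := fun _ => μ) hf
  rw [integral_finsetSum (f := fun i S' => f (A.piecewise S S' i) - ∫ z, f z ∂μ) _
    fun i _ => (hint i).sub (integrable_const _), ← Fintype.sum_ite_mem]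
  refine sum_congr rfl fun i _ => ?_
  rw [integral_sub (hint i) (integrable_const _), integral_comp_piecewise_apply hf.1]
  split_ifs <;> simp

lemma abs_sum_sub_integral_le_integral_piecewise (hf : Integrable f μ) {g : (ι → Z) → ℝ}
    (hfg : ∀ S, |∑ i, (f (S i) - ∫ z, f z ∂μ)| ≤ g S) (A : Finset ι) (S : ι → Z)
    (hgS : Integrable (fun S' => g (A.piecewise S S')) (Measure.pi fun _ => μ)) :
    |∑ i ∈ A, (f (S i) - ∫ z, f z ∂μ)| ≤
      ∫ S', g (A.piecewise S S') ∂Measure.pi (fun _ => μ) := by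
  rw [sum_sub_integral_eq_integral_piecewise hf]
  exact norm_integral_le_of_norm_le hgS
    (.of_forall fun S' => (Real.norm_eq_abs _).trans_le (hfg _))

lemma MeasureTheory.Integrable.comp_piecewise {g : (ι → Z) → ℝ}
    (hg : Integrable g (Measure.pi fun _ => μ)) (A : Finset ι) :
    Integrable (fun p : (ι → Z) × (ι → Z) => g (A.piecewise p.1 p.2))
      ((Measure.pi fun _ => μ).prod (Measure.pi fun _ => μ)) :=
  ((measurePreserving_finset_piecewise A).integrable_comp hg.1).2 hg

lemma integral_integral_comp_piecewise {g : (ι → Z) → ℝ}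
    (hg : Integrable g (Measure.pi fun _ => μ)) (A : Finset ι) :
    ∫ S, ∫ S', g (A.piecewise S S') ∂Measure.pi (fun _ => μ) ∂Measure.pi (fun _ => μ) =
      ∫ S, g S ∂Measure.pi (fun _ => μ) := by
  have hT := measurePreserving_finset_piecewise (μ := μ) A
  rw [← integral_prod _ (hg.comp_piecewise A),
    ← integral_map hT.measurable.aemeasurable (by rw [hT.map_eq]; exact hg.1), hT.map_eq]

end GhostSample

section Desymmetrization

variable {W Z : Type*} [MeasurableSpace Z] {μz : Measure Z} {ℓ : W → Z → ℝ} {Ws : Set W}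
  {B : ℝ} {n : ℕ}

lemma average_mem_Icc_of_forall_mem_Icc (hn : 0 < n) {x : Fin n → ℝ}
    (hx : ∀ i, x i ∈ Set.Icc 0 B) :
    (1 / (n : ℝ)) * ∑ i, x i ∈ Set.Icc 0 B := by
  refine ⟨mul_nonneg (by positivity) (sum_nonneg fun i _ => (hx i).1), ?_⟩
  rw [one_div_mul_eq_div, div_le_iff₀ (by positivity)]
  simpa [mul_comm] using sum_le_sum fun i (_ : i ∈ univ) => (hx i).2

noncomputable def uniformDeviation (μz : Measure Z) (ℓ : W → Z → ℝ) (Ws : Set W)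
    (S : Fin n → Z) : ℝ :=
  ⨆ w ∈ Ws, |(1 / (n : ℝ)) * ∑ i, ℓ w (S i) - ∫ z, ℓ w z ∂μz|

lemma uniformDeviation_nonneg (S : Fin n → Z) : 0 ≤ uniformDeviation μz ℓ Ws S :=
  Real.iSup_nonneg fun _ => Real.iSup_nonneg fun _ => abs_nonneg _

noncomputable def ghostDeviation (μz : Measure Z) (ℓ : W → Z → ℝ) (Ws : Set W)
    (A : Finset (Fin n)) (S : Fin n → Z) : ℝ :=
  ∫ S', uniformDeviation μz ℓ Ws (A.piecewise S S') ∂Measure.pi fun _ => μz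

lemma ghostDeviation_nonneg (A : Finset (Fin n)) (S : Fin n → Z) :
    0 ≤ ghostDeviation μz ℓ Ws A S :=
  integral_nonneg fun _ => uniformDeviation_nonneg _

variable [IsProbabilityMeasure μz]

lemma integral_mem_Icc_of_forall_mem_Icc {f : Z → ℝ} (hf : ∀ z, f z ∈ Set.Icc 0 B) :
    ∫ z, f z ∂μz ∈ Set.Icc 0 B := by
  refine ⟨integral_nonneg fun z => (hf z).1, ?_⟩
  have := norm_integral_le_of_norm_le_const (μ := μz) (C := B) (.of_forall fun z => by
    rw [Real.norm_of_nonneg (hf z).1]; exact (hf z).2)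
  simpa using (le_abs_self _).trans this

lemma abs_sum_sub_integral_le_uniformDeviation (hn : 0 < n)
    (hbdd : ∀ w z, ℓ w z ∈ Set.Icc 0 B) {w : W} (hw : w ∈ Ws) (S : Fin n → Z) :
    |∑ i, (ℓ w (S i) - ∫ z, ℓ w z ∂μz)| ≤ n * uniformDeviation μz ℓ Ws S := by
  have hbound (w : W) : |(1 / (n : ℝ)) * ∑ i, ℓ w (S i) - ∫ z, ℓ w z ∂μz| ≤ B := by
    have h1 := average_mem_Icc_of_forall_mem_Icc hn fun i => hbdd w (S i)
    have h2 := integral_mem_Icc_of_forall_mem_Icc (μz := μz) (hbdd w)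
    rw [abs_sub_le_iff]
    constructor <;> linarith [h1.1, h1.2, h2.1, h2.2]
  have hn' : (0 : ℝ) < n := by exact_mod_cast hn
  have hle := le_ciSup₂
    (f := fun w (_ : w ∈ Ws) => |(1 / (n : ℝ)) * ∑ i, ℓ w (S i) - ∫ z, ℓ w z ∂μz|) ⟨B, by
      simp only [mem_upperBounds, Set.mem_iUnion, Set.mem_range, forall_exists_index]
      rintro _ w _ rfl
      exact hbound w⟩ w hw
  calc |∑ i, (ℓ w (S i) - ∫ z, ℓ w z ∂μz)|
      = |n * ((1 / (n : ℝ)) * ∑ i, ℓ w (S i) - ∫ z, ℓ w z ∂μz)| := by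
        rw [sum_sub_distrib, sum_const, card_univ, Fintype.card_fin, nsmul_eq_mul]
        field_simp
    _ = n * |(1 / (n : ℝ)) * ∑ i, ℓ w (S i) - ∫ z, ℓ w z ∂μz| := by
        rw [abs_mul, abs_of_pos hn']
    _ ≤ n * uniformDeviation μz ℓ Ws S := mul_le_mul_of_nonneg_left hle hn'.le

lemma biSup_sum_sign_mul_le (hn : 0 < n) (hB : 0 ≤ B) (hbdd : ∀ w z, ℓ w z ∈ Set.Icc 0 B)
    (hmeas : ∀ w, Measurable (ℓ w)) (ε : Fin n → Bool) (S : Fin n → Z)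
    (hpos : Integrable
      (fun S' => uniformDeviation μz ℓ Ws (({i | ε i} : Finset _).piecewise S S'))
      (Measure.pi fun _ => μz))
    (hneg : Integrable
      (fun S' => uniformDeviation μz ℓ Ws (({i | ¬ε i} : Finset _).piecewise S S'))
      (Measure.pi fun _ => μz)) :
    ⨆ w ∈ Ws, ∑ i, (if ε i then (1 : ℝ) else -1) * ℓ w (S i) ≤
      n * ghostDeviation μz ℓ Ws {i | ε i} S + n * ghostDeviation μz ℓ Ws {i | ¬ε i} S +
        B * |∑ i, (if ε i then (1 : ℝ) else -1)| := by
  have hrhs : 0 ≤ n * ghostDeviation μz ℓ Ws {i | ε i} S +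
      n * ghostDeviation μz ℓ Ws {i | ¬ε i} S +
        B * |∑ i, (if ε i then (1 : ℝ) else -1)| := by
    have := ghostDeviation_nonneg (μz := μz) (ℓ := ℓ) (Ws := Ws) {i | ε i} S
    have := ghostDeviation_nonneg (μz := μz) (ℓ := ℓ) (Ws := Ws) {i | ¬ε i} S
    positivity
  refine Real.iSup_le (fun w => Real.iSup_le (fun hw => ?_) hrhs) hrhs
  have hint : Integrable (ℓ w) μz :=
    (integrable_const B).mono' (hmeas w).aestronglyMeasurable (.of_forall fun z => by
      rw [Real.norm_of_nonneg (hbdd w z).1]; exact (hbdd w z).2)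
  have hdom := abs_sum_sub_integral_le_uniformDeviation (μz := μz) hn hbdd hw
  have hA := abs_sum_sub_integral_le_integral_piecewise hint hdom _ S (hpos.const_mul n)
  have hA' := abs_sum_sub_integral_le_integral_piecewise hint hdom _ S (hneg.const_mul n)
  rw [integral_const_mul] at hA hA'
  have hR := integral_mem_Icc_of_forall_mem_Icc (μz := μz) (hbdd w)
  have hc : (∫ z, ℓ w z ∂μz) * ∑ i, (if ε i then (1 : ℝ) else -1) ≤
      B * |∑ i, (if ε i then (1 : ℝ) else -1)| := by
    refine (le_abs_self _).trans ?_
    rw [abs_mul, abs_of_nonneg hR.1]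
    gcongr
    exact hR.2
  rw [sum_sign_mul_eq ε _ (∫ z, ℓ w z ∂μz)]
  unfold ghostDeviation
  linarith [le_abs_self (∑ i with ε i, (ℓ w (S i) - ∫ z, ℓ w z ∂μz)),
    neg_le_abs (∑ i with ¬ε i, (ℓ w (S i) - ∫ z, ℓ w z ∂μz))]

lemma integral_empRad_le (hn : 0 < n) (hB : 0 ≤ B) (hbdd : ∀ w z, ℓ w z ∈ Set.Icc 0 B)
    (hmeas : ∀ w, Measurable (ℓ w))
    (hdev : Integrable (uniformDeviation μz ℓ Ws) (Measure.pi fun _ : Fin n => μz))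
    (hrad : Integrable (empRad ℓ Ws) (Measure.pi fun _ : Fin n => μz)) :
    ∫ S, empRad ℓ Ws S ∂Measure.pi (fun _ : Fin n => μz) ≤
      2 * ∫ S, uniformDeviation μz ℓ Ws S ∂Measure.pi (fun _ : Fin n => μz) + B / √n := by
  set ν := Measure.pi fun _ : Fin n => μz
  set G := ∫ S, uniformDeviation μz ℓ Ws S ∂ν
  set c : (Fin n → Bool) → ℝ := fun ε => ∑ i, (if ε i then (1 : ℝ) else -1)
  have hghost (A : Finset (Fin n)) : Integrable (ghostDeviation μz ℓ Ws A) ν :=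
    (hdev.comp_piecewise A).integral_prod_left
  have hae : ∀ᵐ S ∂ν, ∀ A : Finset (Fin n),
      Integrable (fun S' => uniformDeviation μz ℓ Ws (A.piecewise S S')) ν :=
    ae_all_iff.2 fun A => (hdev.comp_piecewise A).prod_right_ae
  set u : (Fin n → Bool) → (Fin n → Z) → ℝ := fun ε S =>
    n * ghostDeviation μz ℓ Ws {i | ε i} S + n * ghostDeviation μz ℓ Ws {i | ¬ε i} S +
      B * |c ε|
  have hu (ε : Fin n → Bool) : Integrable (u ε) ν :=
    (((hghost _).const_mul _).fun_add ((hghost _).const_mul _)).fun_add (integrable_const _)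
  have hu_integral (ε : Fin n → Bool) : ∫ S, u ε S ∂ν = 2 * n * G + B * |c ε| := by
    dsimp only [u]
    rw [integral_add (((hghost _).const_mul _).fun_add ((hghost _).const_mul _))
        (integrable_const _),
      integral_add ((hghost _).const_mul _) ((hghost _).const_mul _),
      integral_const_mul, integral_const_mul, integral_const]
    unfold ghostDeviation
    rw [integral_integral_comp_piecewise hdev, integral_integral_comp_piecewise hdev]
    simp only [probReal_univ, one_smul]
    ring
  have hle : ∀ᵐ S ∂ν, empRad ℓ Ws S ≤ (1 / (n : ℝ)) * ((∑ ε, u ε S) / 2 ^ n) :=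
    hae.mono fun S hS => by
      unfold empRad
      gcongr with ε
      exact biSup_sum_sign_mul_le hn hB hbdd hmeas ε S (hS _) (hS _)
  have hsum := sum_abs_sum_sign_le (ι := Fin n)
  rw [Fintype.card_fin] at hsum
  calc ∫ S, empRad ℓ Ws S ∂ν
      ≤ ∫ S, (1 / (n : ℝ)) * ((∑ ε, u ε S) / 2 ^ n) ∂ν :=
        integral_mono_ae hrad
          (((integrable_finsetSum _ fun ε _ => hu ε).div_const _).const_mul _) hle
    _ = 2 * G + B * (∑ ε, |c ε|) / (n * 2 ^ n) := by
      rw [integral_const_mul, integral_div, integral_finsetSum _ fun ε _ => hu ε]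
      simp only [hu_integral, sum_add_distrib, sum_const, card_univ, Fintype.card_fun,
        Fintype.card_bool, Fintype.card_fin, nsmul_eq_mul, ← mul_sum]
      field_simp
      push_cast
      ring
    _ ≤ 2 * G + B * (2 ^ n * √n) / (n * 2 ^ n) := by gcongr
    _ = 2 * G + B * (√n / n) := by field_simp
    _ = 2 * G + B / √n := by rw [Real.sqrt_div_self']; ring

end Desymmetrization

/-- Desymmetrization inequality: for a fixed hypothesis set `Ws` and a loss bounded in `[0,B]`,
`E_S sup_{w ∈ Ws} |R̂_S(w) - R(w)| ≥ (1/2) E_S[Rad_S(Ws)] - B/(2√n)`. -/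
theorem stmt3 {W Z : Type*} [MeasurableSpace Z] (μz : Measure Z) [IsProbabilityMeasure μz]
    (ℓ : W → Z → ℝ) (Ws : Set W) (B : ℝ) (hB : 0 ≤ B)
    (hbdd : ∀ w z, ℓ w z ∈ Set.Icc 0 B) (hmeas : ∀ w, Measurable (ℓ w))
    (n : ℕ) (hn : 0 < n)
    (hInt1 : Integrable
      (fun S : Fin n → Z =>
        ⨆ w ∈ Ws, |(1 / (n : ℝ)) * ∑ i, ℓ w (S i) - ∫ z, ℓ w z ∂μz|)
      (Measure.pi fun _ : Fin n => μz))
    (hInt2 : Integrable (fun S : Fin n → Z => empRad ℓ Ws S)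
      (Measure.pi fun _ : Fin n => μz)) :
    (∫ S, ⨆ w ∈ Ws, |(1 / (n : ℝ)) * ∑ i, ℓ w (S i) - ∫ z, ℓ w z ∂μz|
        ∂(Measure.pi fun _ : Fin n => μz)) ≥
      (1 / 2) * (∫ S, empRad ℓ Ws S ∂(Measure.pi fun _ : Fin n => μz)) -
        B / (2 * Real.sqrt n) := by
  have hrad := integral_empRad_le hn hB hbdd hmeas hInt1 hInt2
  have hsplit : B / √n = 2 * (B / (2 * √n)) := by ring
  unfold uniformDeviation at hrad
  linarith
end

section
/- (Exponential McDiarmid inequality) Let f : X^n → ℝ satisfy the bounded difference property with constants c₁,…,cₙ: changing the i-th coordinate changes f by at most cᵢ. Then for i.i.d. random variables X₁,…,Xₙ on X and Z = f(X₁,…,Xₙ), for every λ ∈ ℝ, E[exp(λ(Z − E[Z]))] ≤ exp((λ²/8)·Σᵢ cᵢ²). -/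
/-!
Induct on `n`, integrating out the first coordinate. For fixed `y`, `a ↦ f (a, y)` ranges over an
interval of length `c₀`, so by Hoeffding's lemma its centred mgf is at most `exp (λ²c₀²/8)`. The
conditional mean `g y = ∫ f (a, y) dμ(a)` has bounded differences with the remaining constants and,
by Fubini, the same mean as `f`. Factoring `exp (λ (f - 𝔼f)) = exp (λ (g - 𝔼g)) · exp (λ (f - g))`
and integrating first in `a` and then in `y` reduces the claim to the induction hypothesis for `g`.
-/

open MeasureTheory ProbabilityTheory Real Set

section

variable {X : Type*}

def HasBoundedDifferences {ι : Type*} [DecidableEq ι] (f : (ι → X) → ℝ) (c : ι → ℝ) : Prop :=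
  ∀ (i : ι) (x : ι → X) (x' : X), |f x - f (Function.update x i x')| ≤ c i

lemma exists_forall_mem_Icc_of_abs_sub_le {α : Type*} [Nonempty α] {φ : α → ℝ} {c : ℝ}
    (h : ∀ a b, |φ a - φ b| ≤ c) : ∃ m, ∀ a, φ a ∈ Icc m (m + c) := by
  obtain ⟨a₀⟩ := ‹Nonempty α›
  have hbdd : BddBelow (range φ) :=
    ⟨φ a₀ - c, by rintro _ ⟨a, rfl⟩; linarith [(abs_le.1 (h a₀ a)).2]⟩
  refine ⟨⨅ a, φ a, fun a => ⟨ciInf_le hbdd a, ?_⟩⟩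
  have : φ a - c ≤ ⨅ b, φ b := le_ciInf fun b => by linarith [(abs_le.1 (h a b)).2]
  linarith

lemma mgf_sub_integral_le_of_abs_sub_le {α : Type*} [MeasurableSpace α] {μ : Measure α}
    [IsProbabilityMeasure μ] {φ : α → ℝ} (hφ : Measurable φ) {c : ℝ}
    (h : ∀ a b, |φ a - φ b| ≤ c) (t : ℝ) :
    mgf (fun a => φ a - ∫ b, φ b ∂μ) μ t ≤ exp (t ^ 2 * c ^ 2 / 8) := by
  have : Nonempty α := μ.nonempty_of_neZero
  obtain ⟨m, hm⟩ := exists_forall_mem_Icc_of_abs_sub_le h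
  refine ((hasSubgaussianMGF_of_mem_Icc hφ.aemeasurable (ae_of_all _ hm)).mgf_le t).trans_eq ?_
  congr 1
  simp only [add_sub_cancel_left, coe_nnnorm, norm_eq_abs, NNReal.coe_pow, NNReal.coe_div,
    NNReal.coe_ofNat, div_pow, sq_abs]
  ring

section FinCons

variable [MeasurableSpace X] {n : ℕ}

lemma MeasurableEquiv.coe_piFinSuccAbove_zero_symm :
    ⇑(MeasurableEquiv.piFinSuccAbove (fun _ : Fin (n + 1) => X) 0).symm =
      fun z => Fin.cons z.1 z.2 := by
  ext z
  simp [MeasurableEquiv.piFinSuccAbove_symm_apply, Fin.insertNthEquiv, Fin.insertNth_zero']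

lemma measurable_fin_cons :
    Measurable fun z : X × (Fin n → X) => (Fin.cons z.1 z.2 : Fin (n + 1) → X) := by
  rw [← MeasurableEquiv.coe_piFinSuccAbove_zero_symm]
  exact MeasurableEquiv.measurable _

lemma Measurable.comp_fin_cons_left {β : Type*} [MeasurableSpace β] {f : (Fin (n + 1) → X) → β}
    (hf : Measurable f)
    (y : Fin n → X) : Measurable fun a => f (Fin.cons a y) :=
  hf.comp (measurable_fin_cons.comp measurable_prodMk_right)

lemma Measurable.integral_fin_cons {f : (Fin (n + 1) → X) → ℝ} (hf : Measurable f)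
    (μ : Measure X) [SFinite μ] : Measurable fun y : Fin n → X => ∫ a, f (Fin.cons a y) ∂μ :=
  (hf.comp measurable_fin_cons).stronglyMeasurable.integral_prod_left'.measurable

lemma integral_pi_fin_succ_eq_integral_fin_cons {E : Type*} [NormedAddCommGroup E]
    [NormedSpace ℝ E] (μ : Measure X) [SigmaFinite μ] {F : (Fin (n + 1) → X) → E}
    (hF : Integrable F (Measure.pi fun _ => μ)) :
    ∫ x, F x ∂(Measure.pi fun _ => μ) =
      ∫ y, ∫ a, F (Fin.cons a y) ∂μ ∂(Measure.pi fun _ : Fin n => μ) := by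
  have he := (measurePreserving_piFinSuccAbove (fun _ : Fin (n + 1) => μ) 0).symm
  rw [← he.integral_comp', integral_prod_symm]
  · simp only [MeasurableEquiv.coe_piFinSuccAbove_zero_symm]
  · exact he.integrable_comp_emb (MeasurableEquiv.measurableEmbedding _) |>.2 hF

end FinCons

namespace HasBoundedDifferences

section Cons

variable {n : ℕ} {f : (Fin (n + 1) → X) → ℝ} {c : Fin (n + 1) → ℝ}

lemma abs_sub_fin_cons_le (h : HasBoundedDifferences f c) (a a' : X) (y : Fin n → X) :
    |f (Fin.cons a y) - f (Fin.cons a' y)| ≤ c 0 := by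
  simpa only [Fin.update_cons_zero] using h 0 (Fin.cons a y) a'

lemma comp_fin_cons (h : HasBoundedDifferences f c) (a : X) :
    HasBoundedDifferences (fun y => f (Fin.cons a y)) (fun j => c j.succ) := by
  intro j y x'
  simpa only [Fin.cons_update] using h j.succ (Fin.cons a y) x'

end Cons

variable {n : ℕ}

lemma abs_sub_le_sum {f : (Fin n → X) → ℝ} {c : Fin n → ℝ} (h : HasBoundedDifferences f c)
    (x y : Fin n → X) : |f x - f y| ≤ ∑ i, c i := by
  induction n with
  | zero => simp [Subsingleton.elim x y]
  | succ n ih =>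
    rw [← Fin.cons_self_tail x, ← Fin.cons_self_tail y, Fin.sum_univ_succ]
    calc |f (Fin.cons (x 0) (Fin.tail x)) - f (Fin.cons (y 0) (Fin.tail y))|
        ≤ |f (Fin.cons (x 0) (Fin.tail x)) - f (Fin.cons (y 0) (Fin.tail x))|
          + |f (Fin.cons (y 0) (Fin.tail x)) - f (Fin.cons (y 0) (Fin.tail y))| :=
          abs_sub_le _ _ _
      _ ≤ c 0 + ∑ j : Fin n, c j.succ :=
          add_le_add (h.abs_sub_fin_cons_le _ _ _) (ih (h.comp_fin_cons (y 0)) _ _)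

lemma exists_abs_le {f : (Fin n → X) → ℝ} {c : Fin n → ℝ} (h : HasBoundedDifferences f c) :
    ∃ C, ∀ x, |f x| ≤ C := by
  rcases isEmpty_or_nonempty (Fin n → X) with _ | ⟨⟨y⟩⟩
  · exact ⟨0, isEmptyElim⟩
  · refine ⟨|f y| + ∑ i, c i, fun x => ?_⟩
    have := h.abs_sub_le_sum x y
    have := abs_sub_abs_le_abs_sub (f x) (f y)
    linarith

lemma integrable_comp {α : Type*} [MeasurableSpace α] {ν : Measure α} [IsFiniteMeasure ν]
    {f : (Fin n → X) → ℝ} {c : Fin n → ℝ} (h : HasBoundedDifferences f c) {φ : α → Fin n → X}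
    (hfφ : Measurable (f ∘ φ)) : Integrable (f ∘ φ) ν := by
  obtain ⟨C, hC⟩ := h.exists_abs_le
  exact Integrable.of_mem_Icc (-C) C hfφ.aemeasurable (ae_of_all _ fun x => abs_le.1 (hC _))

variable [MeasurableSpace X]

lemma integrable_exp_mul_sub {f : (Fin n → X) → ℝ} {c : Fin n → ℝ}
    (h : HasBoundedDifferences f c) (hf : Measurable f) (ν : Measure (Fin n → X))
    [IsFiniteMeasure ν] (t m : ℝ) : Integrable (fun x => exp (t * (f x - m))) ν := by
  obtain ⟨C, hC⟩ := h.exists_abs_le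
  refine integrable_exp_mul_of_mem_Icc (a := -C - m) (b := C - m) (hf.sub_const m).aemeasurable
    (ae_of_all _ fun x => ?_)
  have := abs_le.1 (hC x)
  exact ⟨by linarith, by linarith⟩

lemma integral_fin_cons {f : (Fin (n + 1) → X) → ℝ} {c : Fin (n + 1) → ℝ}
    (h : HasBoundedDifferences f c) (hf : Measurable f) (μ : Measure X) [IsProbabilityMeasure μ] :
    HasBoundedDifferences (fun y => ∫ a, f (Fin.cons a y) ∂μ) (fun j => c j.succ) := by
  intro j y x'
  have hint (y : Fin n → X) : Integrable (fun a => f (Fin.cons a y)) μ :=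
    h.integrable_comp (hf.comp_fin_cons_left y)
  rw [← integral_sub (hint y) (hint _), ← Real.norm_eq_abs]
  simpa using norm_integral_le_of_norm_le_const (μ := μ)
    (f := fun a => f (Fin.cons a y) - f (Fin.cons a (Function.update y j x')))
    (ae_of_all _ fun a => h.comp_fin_cons a j y x')

theorem mgf_sub_integral_le (μ : Measure X) [IsProbabilityMeasure μ] {f : (Fin n → X) → ℝ}
    {c : Fin n → ℝ} (h : HasBoundedDifferences f c) (hf : Measurable f) (t : ℝ) :
    mgf (fun x => f x - ∫ y, f y ∂(Measure.pi fun _ => μ)) (Measure.pi fun _ => μ) t ≤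
      exp (t ^ 2 / 8 * ∑ i, c i ^ 2) := by
  induction n with
  | zero =>
    have hconst (x : Fin 0 → X) : f x = f Fin.elim0 := congrArg f (Subsingleton.elim _ _)
    simp [mgf, hconst]
  | succ n ih =>
    set g := fun y : Fin n → X => ∫ a, f (Fin.cons a y) ∂μ
    set E := ∫ y, f y ∂(Measure.pi fun _ => μ)
    have hE : E = ∫ y, g y ∂(Measure.pi fun _ => μ) :=
      integral_pi_fin_succ_eq_integral_fin_cons μ (h.integrable_comp (φ := id) hf)
    have hg := h.integral_fin_cons hf μ
    have hoeffding (y : Fin n → X) :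
        mgf (fun a => f (Fin.cons a y) - g y) μ t ≤ exp (t ^ 2 * c 0 ^ 2 / 8) :=
      mgf_sub_integral_le_of_abs_sub_le (hf.comp_fin_cons_left y)
        (fun a a' => h.abs_sub_fin_cons_le a a' y) t
    calc mgf (fun x => f x - E) (Measure.pi fun _ => μ) t
        = ∫ y, exp (t * (g y - E)) * mgf (fun a => f (Fin.cons a y) - g y) μ t
            ∂(Measure.pi fun _ => μ) := by
          simp only [mgf]
          rw [integral_pi_fin_succ_eq_integral_fin_cons μ (h.integrable_exp_mul_sub hf _ t E)]
          refine integral_congr_ae (ae_of_all _ fun y => ?_)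
          simp only [← integral_const_mul, ← exp_add]
          congr 1 with a
          ring_nf
      _ ≤ ∫ y, exp (t * (g y - E)) * exp (t ^ 2 * c 0 ^ 2 / 8) ∂(Measure.pi fun _ => μ) := by
          refine integral_mono_of_nonneg (ae_of_all _ fun y => ?_)
            ((hg.integrable_exp_mul_sub (hf.integral_fin_cons μ) _ t E).mul_const _)
            (ae_of_all _ fun y => mul_le_mul_of_nonneg_left (hoeffding y) (exp_nonneg _))
          exact mul_nonneg (exp_nonneg _) (integral_nonneg fun _ => exp_nonneg _)
      _ = mgf (fun y => g y - ∫ y', g y' ∂(Measure.pi fun _ => μ)) (Measure.pi fun _ => μ) t *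
            exp (t ^ 2 * c 0 ^ 2 / 8) := by
          simp only [mgf]
          rw [integral_mul_const, hE]
      _ ≤ exp (t ^ 2 / 8 * ∑ j : Fin n, c j.succ ^ 2) * exp (t ^ 2 * c 0 ^ 2 / 8) := by
          gcongr
          exact ih hg (hf.integral_fin_cons μ)
      _ = exp (t ^ 2 / 8 * ∑ i, c i ^ 2) := by
          rw [← exp_add, Fin.sum_univ_succ]
          ring_nf

end HasBoundedDifferences

end

/-- Exponential form of McDiarmid's inequality: if `f` has the bounded difference property with
constants `c i`, then for i.i.d. inputs `X₁,…,Xₙ` and `Z = f(X₁,…,Xₙ)`,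
`E[exp(λ(Z - E Z))] ≤ exp((λ²/8) ∑ᵢ cᵢ²)` for every real `λ`. -/
theorem stmt4 {X : Type*} [MeasurableSpace X] (μ : Measure X) [IsProbabilityMeasure μ]
    (n : ℕ) (f : (Fin n → X) → ℝ) (c : Fin n → ℝ)
    (hmeas : Measurable f)
    (hbd : ∀ (i : Fin n) (x : Fin n → X) (x' : X),
      |f x - f (Function.update x i x')| ≤ c i)
    (lam : ℝ) :
    (∫ x, Real.exp (lam * (f x - ∫ y, f y ∂(Measure.pi fun _ : Fin n => μ)))
        ∂(Measure.pi fun _ : Fin n => μ)) ≤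
      Real.exp (lam ^ 2 / 8 * ∑ i, c i ^ 2) :=
  HasBoundedDifferences.mgf_sub_integral_le μ hbd hmeas lam
end

section
/- (Disintegrated PAC-Bayesian bound for random sets) Under the same setting (prior π on a measurable space E of hypothesis sets, posteriors ρ_S ≪ π, measurable Φ with e^Φ ∈ L¹(π ⊗ μ_z^⊗n)), for any ζ ∈ (0,1), with probability at least 1−ζ over the joint draw of S ~ μ_z^⊗n and W ~ ρ_S: Φ(W,S) ≤ log((dρ_S/dπ)(W)) + log(1/ζ) + log E_S E_{W∼π}[e^{Φ(W,S)}]. -/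
/-!
Markov's inequality after a change of measure: on the event `c · dρ/dπ < e^Φ` the density is at
most `e^Φ / c`, so `ρ` gives it mass at most `c⁻¹ ∫ e^Φ dπ`. Taking `c = E_S E_π[e^Φ] / ζ` and
integrating this bound over `S` bounds the probability of the bad event by `ζ`.
-/

open MeasureTheory ProbabilityTheory
open scoped ENNReal

namespace MeasureTheory.Measure

variable {α : Type*} [MeasurableSpace α] {ρ π : Measure α}

theorem measure_mul_rnDeriv_lt_le [ρ.HaveLebesgueDecomposition π] [SFinite π] (hρπ : ρ ≪ π)
    {f : α → ℝ≥0∞} (hf : Measurable f) {c : ℝ≥0∞} (hc0 : c ≠ 0) (hctop : c ≠ ∞) :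
    ρ {w | c * ρ.rnDeriv π w < f w} ≤ c⁻¹ * ∫⁻ w, f w ∂π := by
  set T := {w | c * ρ.rnDeriv π w < f w}
  calc ρ T = ∫⁻ w in T, ρ.rnDeriv π w ∂π := (setLIntegral_rnDeriv hρπ T).symm
    _ ≤ ∫⁻ w in T, c⁻¹ * f w ∂π := by
        refine setLIntegral_mono (hf.const_mul _) fun w hw => ?_
        rw [mul_comm, ← div_eq_mul_inv, ENNReal.le_div_iff_mul_le (.inl hc0) (.inl hctop),
          mul_comm]
        exact le_of_lt hw
    _ ≤ ∫⁻ w, c⁻¹ * f w ∂π := setLIntegral_le_lintegral _ _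
    _ = c⁻¹ * ∫⁻ w, f w ∂π := lintegral_const_mul _ hf

theorem measure_log_rnDeriv_add_lt_le [ρ.HaveLebesgueDecomposition π] [SFinite π]
    [SigmaFinite ρ] (hρπ : ρ ≪ π) {g : α → ℝ} (hg : Measurable g) (a : ℝ) :
    ρ {w | Real.log (ρ.rnDeriv π w).toReal + a < g w}
      ≤ ENNReal.ofReal (Real.exp (-a)) * ∫⁻ w, ENNReal.ofReal (Real.exp (g w)) ∂π := by
  have hinv : ENNReal.ofReal (Real.exp (-a)) = (ENNReal.ofReal (Real.exp a))⁻¹ := by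
    rw [Real.exp_neg, ENNReal.ofReal_inv_of_pos (Real.exp_pos a)]
  rw [hinv]
  refine le_trans (measure_mono_ae ?_) (measure_mul_rnDeriv_lt_le hρπ
    (Real.measurable_exp.comp hg).ennreal_ofReal (by simpa using Real.exp_pos a)
    ENNReal.ofReal_ne_top)
  filter_upwards [rnDeriv_pos hρπ, hρπ.ae_le (rnDeriv_lt_top ρ π)] with w hpos hfin hw
  have hr : 0 < (ρ.rnDeriv π w).toReal := ENNReal.toReal_pos hpos.ne' hfin.ne
  have : Real.exp a * (ρ.rnDeriv π w).toReal < Real.exp (g w) := by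
    rwa [← Real.exp_log hr, ← Real.exp_add, Real.exp_lt_exp, add_comm]
  show ENNReal.ofReal (Real.exp a) * ρ.rnDeriv π w < ENNReal.ofReal (Real.exp (g w))
  rw [← ENNReal.ofReal_toReal hfin.ne, ← ENNReal.ofReal_mul (Real.exp_pos a).le]
  exact (ENNReal.ofReal_lt_ofReal_iff (Real.exp_pos _)).mpr this

end MeasureTheory.Measure

namespace ProbabilityTheory

variable {α β : Type*} [MeasurableSpace α] [MeasurableSpace β]

theorem one_sub_lintegral_compl_le_compProd (μ : Measure α) [IsProbabilityMeasure μ]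
    (κ : Kernel α β) [IsMarkovKernel κ] (s : Set (α × β)) :
    1 - ∫⁻ x, κ x {y | (x, y) ∉ s} ∂μ ≤ (μ ⊗ₘ κ) s := by
  -- `s` is not assumed measurable: the event of the main bound involves `(ρ S).rnDeriv π w`,
  -- which need not be jointly measurable in `(S, w)`. Hence the measurable hull.
  set t := toMeasurable (μ ⊗ₘ κ) s
  have ht : MeasurableSet t := measurableSet_toMeasurable _ s
  have hcompl : (μ ⊗ₘ κ) tᶜ ≤ ∫⁻ x, κ x {y | (x, y) ∉ s} ∂μ := by
    rw [Measure.compProd_apply ht.compl]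
    exact lintegral_mono fun x => measure_mono fun y hy hys =>
      hy (subset_toMeasurable _ s hys)
  calc 1 - ∫⁻ x, κ x {y | (x, y) ∉ s} ∂μ ≤ 1 - (μ ⊗ₘ κ) tᶜ := tsub_le_tsub_left hcompl 1
    _ = (μ ⊗ₘ κ) t := by
        rw [prob_compl_eq_one_sub ht, ENNReal.sub_sub_cancel ENNReal.one_ne_top prob_le_one]
    _ = (μ ⊗ₘ κ) s := measure_toMeasurable s

end ProbabilityTheory

open Measure in
theorem ofReal_one_sub_le_compProd_setOf_le_log_rnDeriv {Ω E : Type*} [MeasurableSpace Ω]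
    [MeasurableSpace E] (μ : Measure Ω) [IsProbabilityMeasure μ] (π : Measure E)
    [IsProbabilityMeasure π] (ρ : Kernel Ω E) [IsMarkovKernel ρ] (habs : ∀ᵐ S ∂μ, ρ S ≪ π)
    {Φ : E → Ω → ℝ} (hΦ : Measurable (Function.uncurry Φ))
    (hint : Integrable (fun p : E × Ω => Real.exp (Φ p.1 p.2)) (π.prod μ)) {ζ : ℝ} (hζ : 0 < ζ) :
    ENNReal.ofReal (1 - ζ) ≤ (μ ⊗ₘ ρ)
      {p | Φ p.2 p.1 ≤ Real.log ((ρ p.1).rnDeriv π p.2).toReal + Real.log (1 / ζ) +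
        Real.log (∫ S, ∫ w, Real.exp (Φ w S) ∂π ∂μ)} := by
  set I := ∫ S, ∫ w, Real.exp (Φ w S) ∂π ∂μ
  set a := Real.log (1 / ζ) + Real.log I
  have hI : I = ∫ p, Real.exp (Φ p.1 p.2) ∂(π.prod μ) := (integral_prod_symm _ hint).symm
  have hI_pos : 0 < I := hI ▸ integral_exp_pos hint
  have hI_lintegral :
      ENNReal.ofReal I = ∫⁻ S, ∫⁻ w, ENNReal.ofReal (Real.exp (Φ w S)) ∂π ∂μ := by
    rw [hI, ofReal_integral_eq_lintegral_ofReal hint (ae_of_all _ fun _ => (Real.exp_pos _).le),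
      lintegral_prod_symm' (fun p => ENNReal.ofReal (Real.exp (Φ p.1 p.2)))
        (Real.measurable_exp.comp hΦ).ennreal_ofReal]
  have hslice : ∀ᵐ S ∂μ, ρ S {w | (S, w) ∉ {p : Ω × E | Φ p.2 p.1 ≤
      Real.log ((ρ p.1).rnDeriv π p.2).toReal + Real.log (1 / ζ) + Real.log I}}
      ≤ ENNReal.ofReal (Real.exp (-a)) * ∫⁻ w, ENNReal.ofReal (Real.exp (Φ w S)) ∂π := by
    filter_upwards [habs] with S hS
    simpa only [Set.mem_ofPred_eq, not_le, add_assoc] using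
      measure_log_rnDeriv_add_lt_le hS (g := fun w => Φ w S)
        (hΦ.comp measurable_prodMk_right) a
  have hexp : Real.exp (-a) * I = ζ := by
    rw [Real.exp_neg, Real.exp_add, Real.exp_log (by positivity), Real.exp_log hI_pos]
    field_simp
  calc ENNReal.ofReal (1 - ζ) ≤ 1 - ENNReal.ofReal ζ := by
        rw [ENNReal.ofReal_sub _ hζ.le, ENNReal.ofReal_one]
    _ = 1 - ENNReal.ofReal (Real.exp (-a)) *
          ∫⁻ S, ∫⁻ w, ENNReal.ofReal (Real.exp (Φ w S)) ∂π ∂μ := by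
        rw [← hI_lintegral, ← ENNReal.ofReal_mul (Real.exp_pos _).le, hexp]
    _ ≤ 1 - ∫⁻ S, ρ S {w | (S, w) ∉ _} ∂μ := by
        rw [← lintegral_const_mul' _ _ ENNReal.ofReal_ne_top]
        exact tsub_le_tsub_left (lintegral_mono_ae hslice) 1
    _ ≤ _ := one_sub_lintegral_compl_le_compProd μ ρ _

/-- Disintegrated PAC-Bayesian bound for random sets: with probability at least `1-ζ` over the
joint draw of `S ~ μ_z^⊗n` and `W ~ ρ_S`,
`Φ(W,S) ≤ log((dρ_S/dπ)(W)) + log(1/ζ) + log E_S E_{W∼π} e^{Φ(W,S)}`. -/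
theorem stmt7 {E Z : Type*} [MeasurableSpace E] [MeasurableSpace Z]
    (μz : Measure Z) [IsProbabilityMeasure μz] (n : ℕ)
    (π : Measure E) [IsProbabilityMeasure π]
    (ρ : Kernel (Fin n → Z) E) [IsMarkovKernel ρ]
    (habs : ∀ᵐ S ∂(Measure.pi fun _ : Fin n => μz), ρ S ≪ π)
    (Φ : E → (Fin n → Z) → ℝ) (hΦ : Measurable (Function.uncurry Φ))
    (hint : Integrable (fun p : E × (Fin n → Z) => Real.exp (Φ p.1 p.2))
      (π.prod (Measure.pi fun _ : Fin n => μz)))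
    (ζ : ℝ) (hζ : ζ ∈ Set.Ioo (0 : ℝ) 1) :
    ENNReal.ofReal (1 - ζ) ≤
      ((Measure.pi fun _ : Fin n => μz) ⊗ₘ ρ)
        {p | Φ p.2 p.1 ≤
              Real.log (((ρ p.1).rnDeriv π p.2).toReal) + Real.log (1 / ζ) +
                Real.log (∫ S', ∫ w, Real.exp (Φ w S') ∂π
                  ∂(Measure.pi fun _ : Fin n => μz))} :=
  ofReal_one_sub_le_compProd_setOf_le_log_rnDeriv _ π ρ habs hΦ hint hζ.1
end
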